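/- The common leakage Δ_r := −(1/2 + 2^{−(r+1)})·log₂(1/2 + 2^{−(r+1)}) + (2^r − 1)(r+1)·2^{−(r+1)} − r/2 of all regular embeddings of the Rabin string OT primitive P^{ROT^r} satisfies Δ_r ≥ 1 − (r+4)·2^{−(r+1)} for every integer r ≥ 1, and Δ_r → 1 as r → ∞. -/
import Mathlib


open Filter

noncomputable section

/-- The common leakage `Δ_r` of all regular embeddings of the Rabin string OT
primitive `P^{ROT^r}`. -/
def rotLeakage (r : ℕ) : ℝ :=
  -(1 / 2 + 2 ^ (-(r + 1 : ℤ))) * Real.logb 2 (1 / 2 + 2 ^ (-(r + 1 : ℤ))) +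
    ((2 : ℝ) ^ r - 1) * (r + 1) * 2 ^ (-(r + 1 : ℤ)) - r / 2

lemma eps_eq (r : ℕ) : (2:ℝ) ^ (-(r + 1 : ℤ)) = (1/2) ^ (r+1) := by
  rw [zpow_neg, one_div, inv_pow]
  norm_cast

lemma rot_eq (r : ℕ) : rotLeakage r =
    1 - r * (1/2:ℝ)^(r+1) - (1/2 + (1/2:ℝ)^(r+1)) * Real.logb 2 (1 + 2 * (1/2:ℝ)^(r+1)) := by
  have hmul : (2:ℝ)^r * (1/2:ℝ)^(r+1) = 1/2 := by
    rw [pow_succ, ← mul_assoc, ← mul_pow]; norm_num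
  have hlog : Real.logb 2 (1/2 + (1/2:ℝ)^(r+1)) = Real.logb 2 (1 + 2*(1/2:ℝ)^(r+1)) - 1 := by
    have h : (1/2 + (1/2:ℝ)^(r+1)) = (1 + 2*(1/2:ℝ)^(r+1)) / 2 := by ring
    rw [h, Real.logb_div (by positivity) two_ne_zero,
      Real.logb_self_eq_one (by norm_num)]
  rw [rotLeakage, eps_eq, hlog]
  linear_combination ((r:ℝ)+1) * hmul

lemma rot_lower (r : ℕ) : 1 - (r + 4) * (1/2:ℝ)^(r+1) ≤ rotLeakage r := by
  rw [rot_eq]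
  set e : ℝ := (1/2)^(r+1) with he
  have he0 : (0:ℝ) < e := by positivity
  have he1 : e ≤ 1/2 := by
    rw [he]
    calc (1/2:ℝ)^(r+1) ≤ (1/2:ℝ)^1 := by
          apply pow_le_pow_of_le_one (by norm_num) (by norm_num) (by omega)
      _ = 1/2 := by norm_num
  have hL : Real.logb 2 (1 + 2*e) ≤ 2*e / Real.log 2 := by
    rw [Real.logb, div_le_div_iff_of_pos_right (Real.log_pos (by norm_num))]
    have := Real.log_le_sub_one_of_pos (show (0:ℝ) < 1 + 2*e by linarith)
    linarith
  have hlog2 : (0.6931471803 : ℝ) < Real.log 2 := Real.log_two_gt_d9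
  have hLnonneg : 0 ≤ Real.logb 2 (1 + 2*e) :=
    Real.logb_nonneg (by norm_num) (by linarith)
  have key : (1/2 + e) * Real.logb 2 (1 + 2*e) ≤ 4 * e := by
    calc (1/2 + e) * Real.logb 2 (1 + 2*e) ≤ 1 * (2*e / Real.log 2) := by
          apply mul_le_mul (by linarith) hL hLnonneg (by norm_num)
      _ ≤ 4 * e := by
          rw [one_mul, div_le_iff₀ (by linarith)]
          nlinarith
  linarith

lemma rot_upper (r : ℕ) : rotLeakage r ≤ 1 := by
  rw [rot_eq]
  have he0 : (0:ℝ) < (1/2:ℝ)^(r+1) := by positivity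
  have hL : 0 ≤ Real.logb 2 (1 + 2*(1/2:ℝ)^(r+1)) :=
    Real.logb_nonneg (by norm_num) (by linarith)
  have : 0 ≤ (r:ℝ) := Nat.cast_nonneg r
  nlinarith

/-- `Δ_r ≥ 1 − (r+4)·2^{−(r+1)}` for every `r ≥ 1`, and `Δ_r → 1`. -/
theorem rotLeakage_bound_and_limit :
    (∀ r : ℕ, 1 ≤ r → 1 - (r + 4) * 2 ^ (-(r + 1 : ℤ)) ≤ rotLeakage r) ∧
    Tendsto rotLeakage atTop (nhds 1) := by
  constructor
  · intro r _
    rw [eps_eq]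
    exact rot_lower r
  · have h0 : Tendsto (fun r : ℕ => 1 - ((r:ℝ) + 4) * (1/2:ℝ)^(r+1)) atTop (nhds 1) := by
      have hA : Tendsto (fun r : ℕ => (r:ℝ) * (1/2:ℝ)^r) atTop (nhds 0) :=
        tendsto_self_mul_const_pow_of_lt_one (by norm_num) (by norm_num)
      have hB : Tendsto (fun r : ℕ => ((1/2:ℝ))^r) atTop (nhds 0) :=
        tendsto_pow_atTop_nhds_zero_of_lt_one (by norm_num) (by norm_num)
      have h1 : Tendsto (fun r : ℕ => ((r:ℝ) + 4) * (1/2:ℝ)^(r+1)) atTop (nhds 0) := by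
        have := ((hA.mul_const (1/2:ℝ)).add (hB.mul_const 2))
        simp only [zero_mul, add_zero, zero_add] at this
        convert this using 2 with r
        rw [pow_succ]
        ring
      have := h1.const_sub 1
      simpa using this
    refine tendsto_of_tendsto_of_tendsto_of_le_of_le h0 tendsto_const_nhds
      (fun r => rot_lower r) (fun r => rot_upper r)

end
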